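/- Let A₁, …, A_m be Hermitian n×n matrices and let z ∈ ℂ^{n×r} have rank k > 0, with smallest nonzero singular value σ_k(z). Let ẑ ∈ ℂ^{n×k} be full rank with z = [ẑ | 0] U for some U ∈ U(r). Define a(z) = min { Σ_j ⟨W, A_j⟩_ℝ² : W Hermitian, P⊥ W P⊥ = 0, ‖W‖₂ = 1 } (P⊥ the projection onto Ran(z)^⊥) and â(z) = min { Σ_j ⟨ẑ w* + w ẑ*, A_j⟩_ℝ² : w ∈ H_{ẑ}, ‖w‖₂ = 1 }, where H_{ẑ} is the orthogonal complement in ℂ^{n×k} of {ẑ K : K skew-Hermitian}. Then (1/(4‖z‖₂²)) â(z) ≤ a(z) ≤ (1/(2σ_k(z)²)) â(z). -/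

import Mathlib

open Matrix Filter
open scoped ComplexOrder

/-- The square root of a positive semidefinite matrix, as `Matrix.PosSemidef.sqrt` was
defined in Mathlib (December 2024); it has since been removed from Mathlib. -/
noncomputable def Matrix.PosSemidef.sqrt {n 𝕜 : Type*} [Fintype n] [DecidableEq n] [RCLike 𝕜]
    {A : Matrix n n 𝕜} (hA : A.PosSemidef) : Matrix n n 𝕜 :=
  hA.1.eigenvectorUnitary.1 * diagonal ((↑) ∘ (√·) ∘ hA.1.eigenvalues) *
    (star hA.1.eigenvectorUnitary : Matrix n n 𝕜)

noncomputable def frob {p q : ℕ} (x : Matrix (Fin p) (Fin q) ℂ) : ℝ :=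
  Real.sqrt (Matrix.trace (xᴴ * x)).re

noncomputable def rinner {p q : ℕ} (X Y : Matrix (Fin p) (Fin q) ℂ) : ℝ :=
  (Matrix.trace (Xᴴ * Y)).re

noncomputable def nuclear {p q : ℕ} (x : Matrix (Fin p) (Fin q) ℂ) : ℝ :=
  (Matrix.trace (Matrix.posSemidef_conjTranspose_mul_self x).sqrt).re

noncomputable def theta {n r : ℕ} (x : Matrix (Fin n) (Fin r) ℂ) : Matrix (Fin n) (Fin n) ℂ :=
  (Matrix.posSemidef_self_mul_conjTranspose x).sqrt

noncomputable def psi {n r : ℕ} (x : Matrix (Fin n) (Fin r) ℂ) : Matrix (Fin n) (Fin n) ℂ :=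
  frob x • theta x

noncomputable def Dmet {n r : ℕ} (x y : Matrix (Fin n) (Fin r) ℂ) : ℝ :=
  ⨅ U : Matrix.unitaryGroup (Fin r) ℂ, frob (x - y * (U : Matrix (Fin r) (Fin r) ℂ))

noncomputable def dmet {n r : ℕ} (x y : Matrix (Fin n) (Fin r) ℂ) : ℝ :=
  ⨅ U : Matrix.unitaryGroup (Fin r) ℂ,
    frob (x - y * (U : Matrix (Fin r) (Fin r) ℂ)) * frob (x + y * (U : Matrix (Fin r) (Fin r) ℂ))


/-- Membership of a Hermitian `W` in the tangent space
`T_z = {W : W* = W, P⊥ W P⊥ = 0}`, `P⊥` being the orthogonal projection onto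
`Ran(z)^⊥`. -/
def tangentCond {n r : ℕ} (z : Matrix (Fin n) (Fin r) ℂ)
    (W : Matrix (Fin n) (Fin n) ℂ) : Prop :=
  Wᴴ = W ∧ ∀ u v : Fin n → ℂ, zᴴ *ᵥ u = 0 → zᴴ *ᵥ v = 0 → star u ⬝ᵥ (W *ᵥ v) = 0

/-- The block matrix `[ẑ | 0] ∈ ℂ^{n×r}` built from `ẑ ∈ ℂ^{n×k}`, `k ≤ r`. -/
def padZero {n k : ℕ} (r : ℕ) (zh : Matrix (Fin n) (Fin k) ℂ) :
    Matrix (Fin n) (Fin r) ℂ :=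
  Matrix.of fun i j => if hj : (j : ℕ) < k then zh i ⟨j, hj⟩ else 0

/-- `a(z) = min {Σ_j ⟨W, A_j⟩_ℝ² : W ∈ T_z, ‖W‖₂ = 1}`. -/
noncomputable def aGeo {n r m : ℕ} (A : Fin m → Matrix (Fin n) (Fin n) ℂ)
    (z : Matrix (Fin n) (Fin r) ℂ) : ℝ :=
  sInf {t : ℝ | ∃ W : Matrix (Fin n) (Fin n) ℂ,
    tangentCond z W ∧ frob W = 1 ∧ t = ∑ j, rinner W (A j) ^ 2}

/-- `â(z) = min {Σ_j ⟨ẑ w* + w ẑ*, A_j⟩_ℝ² : w ∈ H_ẑ, ‖w‖₂ = 1}`, where `H_ẑ` is the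
orthogonal complement of the vertical space `{ẑ K : K* = −K}`. -/
noncomputable def aHat {n k m : ℕ} (A : Fin m → Matrix (Fin n) (Fin n) ℂ)
    (zh : Matrix (Fin n) (Fin k) ℂ) : ℝ :=
  sInf {t : ℝ | ∃ w : Matrix (Fin n) (Fin k) ℂ,
    (∀ K : Matrix (Fin k) (Fin k) ℂ, Kᴴ = -K →
      (Matrix.trace ((zh * K)ᴴ * w)).re = 0) ∧
    frob w = 1 ∧ t = ∑ j, rinner (zh * wᴴ + w * zhᴴ) (A j) ^ 2}

/-!
The map `w ↦ ẑ w* + w ẑ*` sends the horizontal space `H_ẑ` onto the tangent space `T_z`, which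
only depends on `Ran z = Ran ẑ` since `z = ẑ V` with `V V* = 1`. A preimage of a tangent `W` is
`w = Q W ẑ G⁻¹ + ẑ G⁻¹ Y`, where `G = ẑ*ẑ`, `Q` is the projection onto `Ran(ẑ)^⊥` and `Y` is the
Hermitian solution of the Lyapunov equation `G Y + Y G = ẑ* W ẑ`. Both quantities minimise the
same quadratic form, so the bounds reduce to comparing `‖w‖` with `‖ẑ w* + w ẑ*‖`: the latter is
at most `2 ‖ẑ‖ ‖w‖`, and for horizontal `w` the cross term `⟨ẑ w*, w ẑ*⟩ = ‖ẑ* w‖²` is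
nonnegative (`ẑ* w` is Hermitian), so `‖ẑ w* + w ẑ*‖² ≥ 2 ‖ẑ w*‖² ≥ 2 σ² ‖w‖²`.
-/

attribute [local instance] Matrix.frobeniusNormedAddCommGroup Matrix.frobeniusNormedSpace

section Frobenius

variable {p q : ℕ}

lemma norm_sq_eq_sum_normSq (x : Matrix (Fin p) (Fin q) ℂ) :
    ‖x‖ ^ 2 = ∑ i, ∑ j, Complex.normSq (x i j) := by
  rw [frobenius_norm_def, ← Real.rpow_natCast, ← Real.rpow_mul (by positivity)]
  simp [Complex.normSq_eq_norm_sq]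

lemma norm_sq_eq_re_trace (x : Matrix (Fin p) (Fin q) ℂ) : ‖x‖ ^ 2 = (trace (xᴴ * x)).re := by
  simp [norm_sq_eq_sum_normSq, trace, mul_apply, Finset.sum_comm (γ := Fin p),
    ← Complex.normSq_apply]

lemma frob_eq_norm (x : Matrix (Fin p) (Fin q) ℂ) : frob x = ‖x‖ := by
  rw [frob, ← norm_sq_eq_re_trace, Real.sqrt_sq (norm_nonneg x)]

lemma rinner_comm (X Y : Matrix (Fin p) (Fin q) ℂ) : rinner X Y = rinner Y X := by
  rw [rinner, rinner, ← Complex.conj_re, ← Complex.star_def, ← trace_conjTranspose,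
    conjTranspose_mul, conjTranspose_conjTranspose]

lemma rinner_smul_left (c : ℝ) (X Y : Matrix (Fin p) (Fin q) ℂ) :
    rinner (c • X) Y = c * rinner X Y := by
  simp [rinner, conjTranspose_smul, trace_smul]

lemma norm_add_sq_eq (X Y : Matrix (Fin p) (Fin q) ℂ) :
    ‖X + Y‖ ^ 2 = ‖X‖ ^ 2 + 2 * rinner X Y + ‖Y‖ ^ 2 := by
  simp only [norm_sq_eq_re_trace, conjTranspose_add, Matrix.add_mul, Matrix.mul_add, trace_add,
    Complex.add_re]
  rw [← rinner, ← rinner, ← rinner, ← rinner, rinner_comm Y X]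
  ring

lemma rinner_conjTranspose_right (X Y : Matrix (Fin p) (Fin p) ℂ) : rinner X Yᴴ = rinner Xᴴ Y := by
  rw [rinner, rinner, conjTranspose_conjTranspose, ← conjTranspose_mul, trace_conjTranspose,
    Complex.star_def, Complex.conj_re, trace_mul_comm]

lemma rinner_neg_left (X Y : Matrix (Fin p) (Fin q) ℂ) : rinner (-X) Y = -rinner X Y := by
  simp [rinner]

end Frobenius

section SphereInf

variable {p q : ℕ} {P : Matrix (Fin p) (Fin q) ℂ → Prop} {f : Matrix (Fin p) (Fin q) ℂ → ℝ}

noncomputable def sphereInf (P : Matrix (Fin p) (Fin q) ℂ → Prop)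
    (f : Matrix (Fin p) (Fin q) ℂ → ℝ) : ℝ :=
  sInf {t : ℝ | ∃ W, P W ∧ frob W = 1 ∧ t = f W}

lemma sphereInf_nonneg (hf : ∀ W, 0 ≤ f W) : 0 ≤ sphereInf P f :=
  Real.sInf_nonneg fun _ ⟨W, _, _, ht⟩ => ht ▸ hf W

lemma le_sphereInf {b : ℝ} (hne : ∃ W, P W ∧ ‖W‖ = 1) (h : ∀ W, P W → ‖W‖ = 1 → b ≤ f W) :
    b ≤ sphereInf P f := by
  obtain ⟨W, hW, hW1⟩ := hne
  refine le_csInf ⟨f W, W, hW, (frob_eq_norm W).trans hW1, rfl⟩ ?_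
  rintro _ ⟨W, hW, hW1, rfl⟩
  exact h W hW ((frob_eq_norm W).symm.trans hW1)

lemma sphereInf_mul_norm_sq_le (hP : ∀ (c : ℝ) W, P W → P (c • W))
    (hf : ∀ (c : ℝ) W, f (c • W) = c ^ 2 * f W) (hf0 : ∀ W, 0 ≤ f W) {W} (hW : P W) :
    sphereInf P f * ‖W‖ ^ 2 ≤ f W := by
  rcases eq_or_ne W 0 with rfl | hW0
  · simpa using hf0 0
  have hWpos : 0 < ‖W‖ := norm_pos_iff.2 hW0
  have hunit : ‖‖W‖⁻¹ • W‖ = 1 := by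
    rw [norm_smul, norm_inv, norm_norm, inv_mul_cancel₀ hWpos.ne']
  have hle : sphereInf P f ≤ f (‖W‖⁻¹ • W) :=
    csInf_le ⟨0, fun _ ⟨W, _, _, ht⟩ => ht ▸ hf0 W⟩
      ⟨_, hP _ W hW, (frob_eq_norm _).trans hunit, rfl⟩
  rw [hf, inv_pow] at hle
  rwa [← le_div_iff₀ (by positivity), div_eq_inv_mul]

lemma exists_norm_eq_one_of_ne_zero
    (hP : ∀ (c : ℝ) W, P W → P (c • W)) {W} (hW : P W) (hW0 : W ≠ 0) : ∃ W, P W ∧ ‖W‖ = 1 :=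
  ⟨‖W‖⁻¹ • W, hP _ W hW, by
    rw [norm_smul, norm_inv, norm_norm, inv_mul_cancel₀ (norm_ne_zero_iff.2 hW0)]⟩

end SphereInf

section Horizontal

variable {n k : ℕ}

lemma rinner_eq_zero_of_skew_of_isHermitian {K M : Matrix (Fin k) (Fin k) ℂ} (hK : Kᴴ = -K)
    (hM : M.IsHermitian) : rinner K M = 0 := by
  have h := rinner_conjTranspose_right K M
  rw [hM.eq, hK, rinner_neg_left] at h
  linarith

lemma isHermitian_of_forall_rinner_skew {M : Matrix (Fin k) (Fin k) ℂ}
    (h : ∀ K : Matrix (Fin k) (Fin k) ℂ, Kᴴ = -K → rinner K M = 0) : M.IsHermitian := by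
  set K := M - Mᴴ
  have hK : Kᴴ = -K := by simp [K]
  have hKK : ‖K‖ ^ 2 = 0 := by
    rw [norm_sq_eq_re_trace, ← rinner]
    calc rinner K K = rinner K M - rinner K Mᴴ := by simp [K, rinner, Matrix.mul_sub]
      _ = 2 * rinner K M := by rw [rinner_conjTranspose_right, hK, rinner_neg_left]; ring
      _ = 0 := by rw [h K hK, mul_zero]
  exact (sub_eq_zero.1 (norm_eq_zero.1 (pow_eq_zero_iff two_ne_zero |>.1 hKK))).symm

def IsHorizontal (zh w : Matrix (Fin n) (Fin k) ℂ) : Prop :=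
  ∀ K : Matrix (Fin k) (Fin k) ℂ, Kᴴ = -K → (trace ((zh * K)ᴴ * w)).re = 0

lemma isHorizontal_iff {zh w : Matrix (Fin n) (Fin k) ℂ} :
    IsHorizontal zh w ↔ (zhᴴ * w).IsHermitian := by
  have h : ∀ K : Matrix (Fin k) (Fin k) ℂ, (trace ((zh * K)ᴴ * w)).re = rinner K (zhᴴ * w) := by
    intro K; rw [rinner, conjTranspose_mul, Matrix.mul_assoc]
  simp only [IsHorizontal, h]
  exact ⟨isHermitian_of_forall_rinner_skew,
    fun hM _ hK => rinner_eq_zero_of_skew_of_isHermitian hK hM⟩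

lemma IsHorizontal.smul {zh w : Matrix (Fin n) (Fin k) ℂ} (hw : IsHorizontal zh w) (c : ℝ) :
    IsHorizontal zh (c • w) := fun K hK => by
  rw [Matrix.mul_smul, trace_smul, Complex.smul_re, hw K hK, smul_zero]

end Horizontal

section Tangent

variable {n k r : ℕ}

lemma tangentCond.smul {z : Matrix (Fin n) (Fin r) ℂ} {W : Matrix (Fin n) (Fin n) ℂ}
    (hW : tangentCond z W) (c : ℝ) : tangentCond z (c • W) := by
  refine ⟨by rw [conjTranspose_smul, hW.1, star_trivial], fun u v hu hv => ?_⟩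
  rw [smul_mulVec, dotProduct_smul, hW.2 u v hu hv, smul_zero]

lemma tangentCond_mul_conjTranspose_add (zh w : Matrix (Fin n) (Fin k) ℂ) :
    tangentCond zh (zh * wᴴ + w * zhᴴ) := by
  refine ⟨by simp [add_comm], fun u v hu hv => ?_⟩
  rw [add_mulVec, ← mulVec_mulVec, ← mulVec_mulVec, hv, mulVec_zero, add_zero,
    dotProduct_mulVec, ← conjTranspose_conjTranspose zh, ← star_mulVec, hu, star_zero,
    zero_dotProduct]

lemma tangentCond.conjTranspose_mul_mul_eq_zero {z : Matrix (Fin n) (Fin r) ℂ}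
    {W Q : Matrix (Fin n) (Fin n) ℂ}
    (hW : tangentCond z W) (hQ : zᴴ * Q = 0) : Qᴴ * W * Q = 0 := by
  have hcol : ∀ j, zᴴ *ᵥ (Q *ᵥ Pi.single j 1) = 0 := fun j => by
    rw [mulVec_mulVec, hQ, zero_mulVec]
  ext i j
  have := hW.2 _ _ (hcol i) (hcol j)
  rw [star_mulVec, ← dotProduct_mulVec, mulVec_mulVec, mulVec_mulVec] at this
  simpa [Pi.single_apply] using this

lemma conjTranspose_mul_mulVec_eq_zero_iff {V : Matrix (Fin k) (Fin r) ℂ} (hV : V * Vᴴ = 1)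
    (x : Matrix (Fin n) (Fin k) ℂ) (u : Fin n → ℂ) : (x * V)ᴴ *ᵥ u = 0 ↔ xᴴ *ᵥ u = 0 := by
  rw [conjTranspose_mul, ← mulVec_mulVec]
  refine ⟨fun h => ?_, fun h => by rw [h, mulVec_zero]⟩
  rw [← one_mulVec (xᴴ *ᵥ u), ← hV, ← mulVec_mulVec, h, mulVec_zero]

lemma tangentCond_mul {V : Matrix (Fin k) (Fin r) ℂ} (hV : V * Vᴴ = 1)
    (x : Matrix (Fin n) (Fin k) ℂ) : tangentCond (x * V) = tangentCond x := by
  ext W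
  simp only [tangentCond, conjTranspose_mul_mulVec_eq_zero_iff hV]

lemma norm_mul_of_mul_conjTranspose_eq_one {V : Matrix (Fin k) (Fin r) ℂ} (hV : V * Vᴴ = 1)
    (x : Matrix (Fin n) (Fin k) ℂ) : ‖x * V‖ = ‖x‖ := by
  rw [← sq_eq_sq₀ (norm_nonneg _) (norm_nonneg _), norm_sq_eq_re_trace, norm_sq_eq_re_trace,
    conjTranspose_mul, Matrix.mul_assoc, trace_mul_comm, Matrix.mul_assoc, Matrix.mul_assoc, hV,
    Matrix.mul_one]

lemma padZero_eq_mul (zh : Matrix (Fin n) (Fin k) ℂ) :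
    padZero r zh = zh * padZero r (1 : Matrix (Fin k) (Fin k) ℂ) := by
  ext i j
  by_cases hj : (j : ℕ) < k <;> simp [padZero, hj, mul_apply, one_apply]

lemma padZero_one_eq_submatrix (hkr : k ≤ r) :
    padZero r (1 : Matrix (Fin k) (Fin k) ℂ) =
      (1 : Matrix (Fin r) (Fin r) ℂ).submatrix (Fin.castLE hkr) id := by
  ext i j
  by_cases hj : (j : ℕ) < k
  · simp [padZero, hj, one_apply, Fin.ext_iff]
  · simp [padZero, hj, one_apply, Fin.ext_iff]
    omega

lemma padZero_one_mul_conjTranspose (hkr : k ≤ r) :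
    padZero r (1 : Matrix (Fin k) (Fin k) ℂ) * (padZero r (1 : Matrix (Fin k) (Fin k) ℂ))ᴴ = 1 := by
  rw [padZero_one_eq_submatrix hkr, conjTranspose_submatrix, conjTranspose_one,
    ← submatrix_mul _ _ _ _ _ Function.bijective_id, Matrix.one_mul,
    submatrix_one _ (Fin.castLE_injective hkr)]

end Tangent

section Lyapunov

variable {k : ℕ}

lemma eq_zero_of_mul_add_mul_eq_zero {G K : Matrix (Fin k) (Fin k) ℂ} (hG : G.PosDef)
    (h : G * K + K * G = 0) : K = 0 := by
  have hsum : trace (Kᴴ * G * K) + trace (K * G * Kᴴ) = 0 := by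
    rw [trace_mul_cycle K G Kᴴ, ← trace_add, Matrix.mul_assoc, Matrix.mul_assoc, ← Matrix.mul_add,
      h, Matrix.mul_zero, trace_zero]
  have hKGK : Kᴴ * G * K = 0 := by
    have h1 := hG.posSemidef.conjTranspose_mul_mul_same K
    have h2 := hG.posSemidef.mul_mul_conjTranspose_same K
    exact h1.trace_eq_zero_iff.1
      ((add_eq_zero_iff_of_nonneg h1.trace_nonneg h2.trace_nonneg).1 hsum).1
  refine ext_iff_mulVec.2 fun v => ?_
  by_contra hv
  rw [zero_mulVec] at hv
  have := hG.dotProduct_mulVec_pos hv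
  rw [star_mulVec, ← dotProduct_mulVec, mulVec_mulVec, mulVec_mulVec, hKGK] at this
  simp at this

lemma exists_isHermitian_mul_add_mul_eq {G B : Matrix (Fin k) (Fin k) ℂ} (hG : G.PosDef)
    (hB : B.IsHermitian) : ∃ Y : Matrix (Fin k) (Fin k) ℂ, Y.IsHermitian ∧ G * Y + Y * G = B := by
  let L : Matrix (Fin k) (Fin k) ℂ →ₗ[ℂ] Matrix (Fin k) (Fin k) ℂ :=
    LinearMap.mulLeft ℂ G + LinearMap.mulRight ℂ G
  have hL : Function.Injective L := by
    rw [← LinearMap.ker_eq_bot, LinearMap.ker_eq_bot']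
    exact fun K hK => eq_zero_of_mul_add_mul_eq_zero hG hK
  obtain ⟨Y, hY⟩ := LinearMap.injective_iff_surjective.1 hL B
  refine ⟨Y, hL ?_, hY⟩
  change G * Yᴴ + Yᴴ * G = G * Y + Y * G
  have hY' : G * Y + Y * G = B := hY
  rw [hY', ← hB.eq, ← hY', conjTranspose_add, conjTranspose_mul, conjTranspose_mul, hG.1.eq,
    add_comm]

end Lyapunov

section Lift

variable {n k : ℕ}

theorem exists_isHermitian_conjTranspose_mul_and_eq {zh : Matrix (Fin n) (Fin k) ℂ}
    (hzh : Function.Injective zh.mulVec) {W : Matrix (Fin n) (Fin n) ℂ} (hW : tangentCond zh W) :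
    ∃ w : Matrix (Fin n) (Fin k) ℂ, (zhᴴ * w).IsHermitian ∧ zh * wᴴ + w * zhᴴ = W := by
  have hG : (zhᴴ * zh).PosDef := .conjTranspose_mul_self zh hzh
  obtain ⟨R, hRG, hR⟩ : ∃ R : Matrix (Fin n) (Fin k) ℂ, zh = R * (zhᴴ * zh) ∧ zhᴴ * R = 1 := by
    have hGu := (isUnit_iff_isUnit_det _).1 hG.isUnit
    refine ⟨zh * (zhᴴ * zh)⁻¹, ?_, ?_⟩
    · rw [Matrix.mul_assoc, nonsing_inv_mul _ hGu, Matrix.mul_one]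
    · rw [← Matrix.mul_assoc, mul_nonsing_inv _ hGu]
  set G := zhᴴ * zh
  set Q := 1 - R * G * Rᴴ
  have hQ : Qᴴ = Q := by simp [Q, hG.1.eq, Matrix.mul_assoc]
  have hzQ : zhᴴ * Q = 0 := by
    rw [Matrix.mul_sub, Matrix.mul_one, ← Matrix.mul_assoc, ← Matrix.mul_assoc, hR,
      Matrix.one_mul, hRG, conjTranspose_mul, hG.1.eq, sub_self]
  have hQWQ : Q * W * Q = 0 := by simpa [hQ] using hW.conjTranspose_mul_mul_eq_zero hzQ
  -- `P = R G Rᴴ` is the orthogonal projection onto `Ran ẑ` and `W = PWQ + QWP + PWP` as `QWQ = 0`;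
  -- the Lyapunov solution `Y` makes `R (GY + YG) Rᴴ = PWP` while `ẑᴴ w = Y` stays Hermitian.
  obtain ⟨Y, hY, hGY⟩ :=
    exists_isHermitian_mul_add_mul_eq hG (isHermitian_conjTranspose_mul_mul zh hW.1)
  refine ⟨Q * W * R + R * Y, ?_, ?_⟩
  · rwa [Matrix.mul_add, ← Matrix.mul_assoc, ← Matrix.mul_assoc, ← Matrix.mul_assoc, hzQ, hR,
      Matrix.zero_mul, Matrix.zero_mul, Matrix.one_mul, zero_add]
  · calc zh * (Q * W * R + R * Y)ᴴ + (Q * W * R + R * Y) * zhᴴ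
        = R * G * Rᴴ * W * Q + Q * W * (R * G * Rᴴ) + R * (G * Y + Y * G) * Rᴴ := by
          rw [hRG]
          simp only [conjTranspose_add, conjTranspose_mul, hQ, hW.1, hY.eq, hG.1.eq,
            Matrix.mul_add, Matrix.add_mul, Matrix.mul_assoc]
          abel
      _ = W - Q * W * Q := by
          rw [hGY, hRG, conjTranspose_mul, hG.1.eq]
          simp only [Q, Matrix.mul_sub, Matrix.sub_mul, Matrix.mul_one, Matrix.one_mul,
            Matrix.mul_assoc]
          abel
      _ = W := by rw [hQWQ, sub_zero]

end Lift

section SmallestSingularValue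

variable {n k : ℕ} {zh : Matrix (Fin n) (Fin k) ℂ} {σ : ℝ}

lemma sq_mul_sum_normSq_le_of_sq_eq_sInf
    (hσ : σ ^ 2 = sInf {t : ℝ | ∃ v : Fin k → ℂ,
      (∑ i, Complex.normSq (v i)) = 1 ∧ t = ∑ i, Complex.normSq ((zh *ᵥ v) i)})
    (v : Fin k → ℂ) :
    σ ^ 2 * ∑ i, Complex.normSq (v i) ≤ ∑ i, Complex.normSq ((zh *ᵥ v) i) := by
  set s := ∑ i, Complex.normSq (v i)
  have hs0 : 0 ≤ s := Finset.sum_nonneg fun i _ => Complex.normSq_nonneg (v i)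
  rcases hs0.eq_or_lt with hs | hs
  · rw [← hs, mul_zero]
    exact Finset.sum_nonneg fun i _ => Complex.normSq_nonneg _
  set c : ℝ := (√s)⁻¹
  have hc : c ^ 2 * s = 1 := by
    rw [inv_pow, Real.sq_sqrt hs.le, inv_mul_cancel₀ hs.ne']
  have hscale : ∀ {p : ℕ} (u : Fin p → ℂ),
      ∑ i, Complex.normSq (((c : ℂ) • u) i) = c ^ 2 * ∑ i, Complex.normSq (u i) := fun u => by
    simp [Finset.mul_sum, Complex.normSq_mul, sq]
  have hle : σ ^ 2 ≤ c ^ 2 * ∑ i, Complex.normSq ((zh *ᵥ v) i) := by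
    rw [hσ, ← hscale (zh *ᵥ v), ← mulVec_smul]
    refine csInf_le ⟨0, ?_⟩ ⟨(c : ℂ) • v, by rw [hscale, hc], rfl⟩
    rintro _ ⟨u, -, rfl⟩
    exact Finset.sum_nonneg fun i _ => Complex.normSq_nonneg _
  calc σ ^ 2 * s ≤ c ^ 2 * (∑ i, Complex.normSq ((zh *ᵥ v) i)) * s := by gcongr
    _ = ∑ i, Complex.normSq ((zh *ᵥ v) i) := by rw [mul_right_comm, hc, one_mul]

lemma sq_mul_norm_sq_le_norm_mul_sq
    (hb : ∀ v, σ ^ 2 * ∑ i, Complex.normSq (v i) ≤ ∑ i, Complex.normSq ((zh *ᵥ v) i))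
    {q : ℕ} (K : Matrix (Fin k) (Fin q) ℂ) :
    σ ^ 2 * ‖K‖ ^ 2 ≤ ‖zh * K‖ ^ 2 := by
  rw [norm_sq_eq_sum_normSq, norm_sq_eq_sum_normSq, Finset.sum_comm, Finset.sum_comm (γ := Fin n),
    Finset.mul_sum]
  exact Finset.sum_le_sum fun j _ => hb fun l => K l j

lemma injective_mulVec_of_sq_mul_sum_normSq_le
    (hb : ∀ v, σ ^ 2 * ∑ i, Complex.normSq (v i) ≤ ∑ i, Complex.normSq ((zh *ᵥ v) i))
    (hσ : σ ≠ 0) : Function.Injective zh.mulVec := by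
  refine (injective_iff_map_eq_zero zh.mulVecLin).2 fun v hv => ?_
  have hs0 : ∀ i, 0 ≤ Complex.normSq (v i) := fun i => Complex.normSq_nonneg (v i)
  have h := hb v
  simp only [show zh *ᵥ v = 0 from hv, Pi.zero_apply, map_zero, Finset.sum_const_zero] at h
  have hs : ∑ i, Complex.normSq (v i) = 0 :=
    le_antisymm (nonpos_of_mul_nonpos_right h (by positivity)) (Finset.sum_nonneg fun i _ => hs0 i)
  ext i
  exact Complex.normSq_eq_zero.1 (congrFun ((Fintype.sum_eq_zero_iff_of_nonneg hs0).1 hs) i)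

end SmallestSingularValue

section Bounds

variable {n k r m : ℕ} (A : Fin m → Matrix (Fin n) (Fin n) ℂ)

noncomputable def sumSqInner (W : Matrix (Fin n) (Fin n) ℂ) : ℝ := ∑ j, rinner W (A j) ^ 2

lemma sumSqInner_nonneg (W : Matrix (Fin n) (Fin n) ℂ) : 0 ≤ sumSqInner A W :=
  Finset.sum_nonneg fun _ _ => sq_nonneg _

lemma sumSqInner_smul (c : ℝ) (W : Matrix (Fin n) (Fin n) ℂ) :
    sumSqInner A (c • W) = c ^ 2 * sumSqInner A W := by
  simp [sumSqInner, rinner_smul_left, mul_pow, Finset.mul_sum]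

lemma aGeo_eq_sphereInf (z : Matrix (Fin n) (Fin r) ℂ) :
    aGeo A z = sphereInf (tangentCond z) (sumSqInner A) := rfl

lemma aHat_eq_sphereInf (zh : Matrix (Fin n) (Fin k) ℂ) :
    aHat A zh = sphereInf (IsHorizontal zh) fun w => sumSqInner A (zh * wᴴ + w * zhᴴ) := rfl

lemma aGeo_mul {V : Matrix (Fin k) (Fin r) ℂ} (hV : V * Vᴴ = 1) (x : Matrix (Fin n) (Fin k) ℂ) :
    aGeo A (x * V) = aGeo A x := by
  rw [aGeo_eq_sphereInf, aGeo_eq_sphereInf, tangentCond_mul hV]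

lemma aGeo_mul_norm_sq_le {z : Matrix (Fin n) (Fin r) ℂ} {W : Matrix (Fin n) (Fin n) ℂ}
    (hW : tangentCond z W) : aGeo A z * ‖W‖ ^ 2 ≤ sumSqInner A W :=
  sphereInf_mul_norm_sq_le (fun c _ hW => hW.smul c) (sumSqInner_smul A) (sumSqInner_nonneg A) hW

lemma aHat_mul_norm_sq_le {zh w : Matrix (Fin n) (Fin k) ℂ} (hw : IsHorizontal zh w) :
    aHat A zh * ‖w‖ ^ 2 ≤ sumSqInner A (zh * wᴴ + w * zhᴴ) := by
  have hsym : ∀ (c : ℝ) (w : Matrix (Fin n) (Fin k) ℂ),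
      zh * (c • w)ᴴ + (c • w) * zhᴴ = c • (zh * wᴴ + w * zhᴴ) := fun c w => by
    rw [conjTranspose_smul, star_trivial, Matrix.mul_smul, Matrix.smul_mul, smul_add]
  rw [aHat_eq_sphereInf]
  exact sphereInf_mul_norm_sq_le (fun c _ hw => hw.smul c)
    (fun c w => by simp only [hsym, sumSqInner_smul]) (fun _ => sumSqInner_nonneg A _) hw

theorem one_div_mul_aHat_le_aGeo {zh : Matrix (Fin n) (Fin k) ℂ}
    (hzh : Function.Injective zh.mulVec) (hzh0 : zh ≠ 0) :
    1 / (4 * ‖zh‖ ^ 2) * aHat A zh ≤ aGeo A zh := by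
  refine le_sphereInf (exists_norm_eq_one_of_ne_zero (fun c _ hW => hW.smul c)
    (tangentCond_mul_conjTranspose_add zh zh) ?_) fun W hW hW1 => ?_
  · rw [← two_smul ℂ, smul_ne_zero_iff]
    exact ⟨two_ne_zero, fun h =>
      hzh0 (trace_mul_conjTranspose_self_eq_zero_iff.1 (by rw [h, trace_zero]))⟩
  obtain ⟨w, hwH, rfl⟩ := exists_isHermitian_conjTranspose_mul_and_eq hzh hW
  have h1 := aHat_mul_norm_sq_le A (isHorizontal_iff.2 hwH)
  have h2 : 1 ≤ 2 * ‖zh‖ * ‖w‖ := by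
    calc 1 = ‖zh * wᴴ + w * zhᴴ‖ := hW1.symm
      _ ≤ ‖zh‖ * ‖wᴴ‖ + ‖w‖ * ‖zhᴴ‖ :=
        (norm_add_le _ _).trans (add_le_add (frobenius_norm_mul _ _) (frobenius_norm_mul _ _))
      _ = 2 * ‖zh‖ * ‖w‖ := by
        rw [frobenius_norm_conjTranspose, frobenius_norm_conjTranspose]; ring
  have h0 : 0 ≤ aHat A zh := sphereInf_nonneg fun _ => sumSqInner_nonneg A _
  show _ ≤ sumSqInner A _
  rw [one_div, inv_mul_le_iff₀ (by positivity)]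
  calc aHat A zh ≤ aHat A zh * (2 * ‖zh‖ * ‖w‖) ^ 2 := le_mul_of_one_le_right h0 (one_le_pow₀ h2)
    _ = 4 * ‖zh‖ ^ 2 * (aHat A zh * ‖w‖ ^ 2) := by ring
    _ ≤ 4 * ‖zh‖ ^ 2 * sumSqInner A (zh * wᴴ + w * zhᴴ) := by gcongr

lemma two_mul_sq_mul_norm_sq_le {zh w : Matrix (Fin n) (Fin k) ℂ} {σ : ℝ}
    (hb : ∀ K : Matrix (Fin k) (Fin n) ℂ, σ ^ 2 * ‖K‖ ^ 2 ≤ ‖zh * K‖ ^ 2)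
    (hw : (zhᴴ * w).IsHermitian) : 2 * σ ^ 2 * ‖w‖ ^ 2 ≤ ‖zh * wᴴ + w * zhᴴ‖ ^ 2 := by
  have hX : w * zhᴴ = (zh * wᴴ)ᴴ := by rw [conjTranspose_mul, conjTranspose_conjTranspose]
  have hcross : rinner (zh * wᴴ) (w * zhᴴ) = ‖zhᴴ * w‖ ^ 2 := by
    rw [rinner, ← hX, norm_sq_eq_re_trace, hw.eq]
    simp only [Matrix.mul_assoc]
    rw [trace_mul_comm w]
    simp only [Matrix.mul_assoc]
  have hbw := hb wᴴ
  rw [frobenius_norm_conjTranspose] at hbw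
  rw [norm_add_sq_eq, hcross, hX, frobenius_norm_conjTranspose]
  nlinarith [sq_nonneg ‖zhᴴ * w‖]

theorem aGeo_le_one_div_mul_aHat {zh : Matrix (Fin n) (Fin k) ℂ} {σ : ℝ} (hσ : σ ≠ 0)
    (hb : ∀ K : Matrix (Fin k) (Fin n) ℂ, σ ^ 2 * ‖K‖ ^ 2 ≤ ‖zh * K‖ ^ 2) (hzh0 : zh ≠ 0) :
    aGeo A zh ≤ 1 / (2 * σ ^ 2) * aHat A zh := by
  have h0 : 0 ≤ aGeo A zh := sphereInf_nonneg (sumSqInner_nonneg A)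
  rw [one_div, le_inv_mul_iff₀ (by positivity), aHat_eq_sphereInf]
  refine le_sphereInf (exists_norm_eq_one_of_ne_zero (fun c _ hw => hw.smul c)
    (isHorizontal_iff.2 (isHermitian_conjTranspose_mul_self zh)) hzh0) fun w hw hw1 => ?_
  have h1 := aGeo_mul_norm_sq_le A (tangentCond_mul_conjTranspose_add zh w)
  have h2 := two_mul_sq_mul_norm_sq_le hb (isHorizontal_iff.1 hw)
  rw [hw1, one_pow, mul_one] at h2
  calc 2 * σ ^ 2 * aGeo A zh ≤ aGeo A zh * ‖zh * wᴴ + w * zhᴴ‖ ^ 2 := by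
        rw [mul_comm]; exact mul_le_mul_of_nonneg_left h2 h0
    _ ≤ sumSqInner A (zh * wᴴ + w * zhᴴ) := h1

end Bounds

theorem aGeo_aHat_local_bounds_general (n r k m : ℕ) (hk : 0 < k) (hkr : k ≤ r)
    (A : Fin m → Matrix (Fin n) (Fin n) ℂ)
    (z : Matrix (Fin n) (Fin r) ℂ)
    (zh : Matrix (Fin n) (Fin k) ℂ)
    (U : Matrix (Fin r) (Fin r) ℂ) (hU : U ∈ Matrix.unitaryGroup (Fin r) ℂ)
    (hz : z = padZero r zh * U)
    (σ : ℝ) (hσpos : 0 < σ)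
    (hσ : σ ^ 2 = sInf {t : ℝ | ∃ v : Fin k → ℂ,
      (∑ i, Complex.normSq (v i)) = 1 ∧ t = ∑ i, Complex.normSq ((zh *ᵥ v) i)}) :
    (1 / (4 * frob z ^ 2)) * aHat A zh ≤ aGeo A z ∧
    aGeo A z ≤ (1 / (2 * σ ^ 2)) * aHat A zh := by
  have hb := sq_mul_sum_normSq_le_of_sq_eq_sInf hσ
  have hinj := injective_mulVec_of_sq_mul_sum_normSq_le hb hσpos.ne'
  have hzh0 : zh ≠ 0 := by
    rintro rfl
    exact one_ne_zero <| Pi.single_eq_zero_iff.1 <|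
      hinj (a₁ := Pi.single (⟨0, hk⟩ : Fin k) (1 : ℂ)) (a₂ := 0) (by rw [zero_mulVec, zero_mulVec])
  set V := padZero r (1 : Matrix (Fin k) (Fin k) ℂ) * U
  have hV : V * Vᴴ = 1 := by
    rw [conjTranspose_mul, Matrix.mul_assoc, ← Matrix.mul_assoc U, ← star_eq_conjTranspose,
      mem_unitaryGroup_iff.1 hU, Matrix.one_mul, padZero_one_mul_conjTranspose hkr]
  rw [hz, padZero_eq_mul, Matrix.mul_assoc, aGeo_mul A hV, frob_eq_norm,
    norm_mul_of_mul_conjTranspose_eq_one hV]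
  exact ⟨one_div_mul_aHat_le_aGeo A hinj hzh0,
    aGeo_le_one_div_mul_aHat A hσpos.ne' (sq_mul_norm_sq_le_norm_mul_sq hb) hzh0⟩

/-- for `z ∈ ℂ^{n×r}` of rank `k > 0` with `z = [ẑ | 0] U`, `ẑ` full rank,
and `σ` the smallest nonzero singular value of `z`,
`(1/(4‖z‖₂²)) â(z) ≤ a(z) ≤ (1/(2σ²)) â(z)`. -/
theorem aGeo_aHat_local_bounds (n r k m : ℕ) (hk : 0 < k) (hkr : k ≤ r) (hrn : r ≤ n)
    (A : Fin m → Matrix (Fin n) (Fin n) ℂ) (hA : ∀ j, (A j).IsHermitian)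
    (z : Matrix (Fin n) (Fin r) ℂ) (hzrank : z.rank = k)
    (zh : Matrix (Fin n) (Fin k) ℂ) (hzhrank : zh.rank = k)
    (U : Matrix (Fin r) (Fin r) ℂ) (hU : U ∈ Matrix.unitaryGroup (Fin r) ℂ)
    (hz : z = padZero r zh * U)
    (σ : ℝ) (hσpos : 0 < σ)
    (hσ : σ ^ 2 = sInf {t : ℝ | ∃ v : Fin k → ℂ,
      (∑ i, Complex.normSq (v i)) = 1 ∧ t = ∑ i, Complex.normSq ((zh *ᵥ v) i)}) :
    (1 / (4 * frob z ^ 2)) * aHat A zh ≤ aGeo A z ∧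
    aGeo A z ≤ (1 / (2 * σ ^ 2)) * aHat A zh :=
  aGeo_aHat_local_bounds_general n r k m hk hkr A z zh U hU hz σ hσpos hσ
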